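/- arXiv:1111.4729 — 2 statements merged into one kernel-verified Lean document; each statement's English description precedes it below -/
import Mathlib

section
/- Suppose G is an ergodic signed digraph in which, for every pair of vertices i, j, all directed paths from i to j of the same length have the same sign. Then for every pair i, j, all even-length directed paths from i to j have the same sign. -/
open Matrix Filter Topology Finset

/-- A directed walk of given length in a digraph with edge relation `E`. -/
def DiWalk {V : Type*} (E : V → V → Prop) : ℕ → V → V → Prop
  | 0, i, j => i = j
  | n + 1, i, j => ∃ k, E i k ∧ DiWalk E n k j

/-- Strong connectivity: every node reaches every other node by some walk. -/
def DiStronglyConnected {V : Type*} (E : V → V → Prop) : Prop :=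
  ∀ i j : V, ∃ n : ℕ, DiWalk E n i j

/-- Aperiodicity: the gcd of the lengths of all (positive-length) closed walks is 1. -/
def DiAperiodic {V : Type*} (E : V → V → Prop) : Prop :=
  ∀ d : ℕ, (∀ n : ℕ, 0 < n → (∃ i, DiWalk E n i i) → d ∣ n) → d = 1

/-- A signed directed walk of given length and total sign `s` (product of edge signs). -/
def SWalk {V : Type*} (E : V → V → Prop) (σ : V → V → ℤ) : ℕ → ℤ → V → V → Prop
  | 0, s, i, j => i = j ∧ s = 1
  | n + 1, s, i, j => ∃ k s', E i k ∧ SWalk E σ n s' k j ∧ s = σ i k * s'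

/-- Balanced signed digraph: a bipartition with positive edges inside parts,
negative edges across. -/
def SBalancedG {V : Type*} (E : V → V → Prop) (σ : V → V → ℤ) : Prop :=
  ∃ S : Set V, ∀ i j, E i j → (σ i j = 1 ↔ (i ∈ S ↔ j ∈ S))

/-- Anti-balanced signed digraph: negative edges inside parts, positive edges across. -/
def SAntiBalancedG {V : Type*} (E : V → V → Prop) (σ : V → V → ℤ) : Prop :=
  ∃ S : Set V, ∀ i j, E i j → (σ i j = -1 ↔ (i ∈ S ↔ j ∈ S))

/-!
Strong connectivity and aperiodicity give a closed walk of odd length `ℓ` through every vertex.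
If `w` is a closed walk of positive even length `L` and sign `s` at the same vertex, then `w`
repeated `ℓ` times and the odd walk repeated `L` times have equal length, so `s ^ ℓ = (±1) ^ L = 1`,
and hence `s = 1` because `ℓ` is odd. Two even walks `i → j` of signs `s`, `s'`, joined by a walk
`j → i` used twice, form a closed even walk of sign `s * s'`, so `s = s'`.
-/

section SignedWalks

variable {V : Type*} {E : V → V → Prop} {σ : V → V → ℤ}

theorem DiWalk.append {n m : ℕ} {i j k : V} (hw : DiWalk E n i j) (hw' : DiWalk E m j k) :
    DiWalk E (n + m) i k := by
  induction n generalizing i with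
  | zero => subst hw; simpa using hw'
  | succ n ih =>
    obtain ⟨l, hE, hw⟩ := hw
    rw [Nat.add_right_comm]
    exact ⟨l, hE, ih hw⟩

theorem DiWalk.exists_sWalk {n : ℕ} {i j : V} (hw : DiWalk E n i j) :
    ∃ s, SWalk E σ n s i j := by
  induction n generalizing i with
  | zero => exact ⟨1, hw, rfl⟩
  | succ n ih =>
    obtain ⟨k, hE, hw⟩ := hw
    obtain ⟨s, hs⟩ := ih hw
    exact ⟨σ i k * s, k, s, hE, hs, rfl⟩

theorem SWalk.append {n m : ℕ} {s t : ℤ} {i j k : V}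
    (hw : SWalk E σ n s i j) (hw' : SWalk E σ m t j k) :
    SWalk E σ (n + m) (s * t) i k := by
  induction n generalizing i s with
  | zero => obtain ⟨rfl, rfl⟩ := hw; simpa using hw'
  | succ n ih =>
    obtain ⟨l, s', hE, hw, rfl⟩ := hw
    rw [Nat.add_right_comm]
    exact ⟨l, s' * t, hE, ih hw, by ring⟩

theorem SWalk.pow {n : ℕ} {s : ℤ} {i : V} (hw : SWalk E σ n s i i) (k : ℕ) :
    SWalk E σ (k * n) (s ^ k) i i := by
  induction k with
  | zero => simp only [Nat.zero_mul, pow_zero]; exact ⟨rfl, rfl⟩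
  | succ k ih =>
    rw [pow_succ', Nat.succ_mul, Nat.add_comm]
    exact hw.append ih

theorem SWalk.sign_eq_one_or_neg_one (hσ : ∀ i j, E i j → σ i j = 1 ∨ σ i j = -1)
    {n : ℕ} {s : ℤ} {i j : V} (hw : SWalk E σ n s i j) : s = 1 ∨ s = -1 := by
  induction n generalizing i s with
  | zero => exact Or.inl hw.2
  | succ n ih =>
    obtain ⟨k, s', hE, hw, rfl⟩ := hw
    rcases hσ i k hE with h | h <;> rcases ih hw with h' | h' <;> simp [h, h']

theorem DiAperiodic.exists_odd_closed_diWalk (hsc : DiStronglyConnected E)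
    (hap : DiAperiodic E) (i : V) : ∃ ℓ, Odd ℓ ∧ DiWalk E ℓ i i := by
  have h_odd_cycle : ∃ n, Odd n ∧ ∃ j, DiWalk E n j j := by
    by_contra! h
    have h_two : (2 : ℕ) = 1 := hap 2 fun n _ ⟨j, hw⟩ =>
      even_iff_two_dvd.mp (Nat.not_odd_iff_even.mp fun hn => h n hn j hw)
    omega
  obtain ⟨n, ⟨a, hn⟩, j, hc⟩ := h_odd_cycle
  obtain ⟨p, hp⟩ := hsc i j
  obtain ⟨q, hq⟩ := hsc j i
  rcases Nat.even_or_odd (p + q) with ⟨k, hpq⟩ | hpq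
  · exact ⟨p + (n + q), ⟨k + a, by omega⟩, hp.append (hc.append hq)⟩
  · exact ⟨p + q, hpq, hp.append hq⟩

theorem SWalk.sign_eq_one_of_even_closed (hσ : ∀ i j, E i j → σ i j = 1 ∨ σ i j = -1)
    {i : V} (hsame : ∀ (n : ℕ) (s s' : ℤ), 0 < n →
      SWalk E σ n s i i → SWalk E σ n s' i i → s = s')
    {ℓ : ℕ} {u : ℤ} (hℓ : Odd ℓ) (hc : SWalk E σ ℓ u i i)
    {L : ℕ} {s : ℤ} (hL : 0 < L) (hLe : Even L) (hw : SWalk E σ L s i i) : s = 1 := by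
  have hpow : s ^ ℓ = u ^ L :=
    hsame _ _ _ (Nat.mul_pos hℓ.pos hL) (hw.pow ℓ) (Nat.mul_comm L ℓ ▸ hc.pow L)
  rcases hc.sign_eq_one_or_neg_one hσ with rfl | rfl <;>
    rcases hw.sign_eq_one_or_neg_one hσ with rfl | rfl <;>
    simp_all [hLe.neg_one_pow, hℓ.neg_one_pow]

end SignedWalks

/-- If in an ergodic signed digraph all equal-length paths between any fixed pair
of vertices have the same sign, then all even-length paths between any fixed pair
of vertices have the same sign. -/
theorem same_length_same_sign_imp_even_same_sign {V : Type*}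
    (E : V → V → Prop) (σ : V → V → ℤ)
    (hσ : ∀ i j, E i j → σ i j = 1 ∨ σ i j = -1)
    (hsc : DiStronglyConnected E) (hap : DiAperiodic E)
    (hsame : ∀ (i j : V) (n : ℕ) (s s' : ℤ), 0 < n →
      SWalk E σ n s i j → SWalk E σ n s' i j → s = s') :
    ∀ (i j : V) (n m : ℕ) (s s' : ℤ), 0 < n → 0 < m → Even n → Even m →
      SWalk E σ n s i j → SWalk E σ m s' i j → s = s' := by
  intro i j n m s s' hn _ hen hem hw hw'
  obtain ⟨ℓ, hℓ, hc⟩ := hap.exists_odd_closed_diWalk hsc i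
  obtain ⟨u, hc⟩ := hc.exists_sWalk (σ := σ)
  obtain ⟨r, hr⟩ := hsc j i
  obtain ⟨t, hr⟩ := hr.exists_sWalk (σ := σ)
  have h_even : Even (n + (r + (m + r))) := by
    obtain ⟨a, rfl⟩ := hen
    obtain ⟨b, rfl⟩ := hem
    exact ⟨a + r + b, by ring⟩
  have h_closed : s * (t * (s' * t)) = 1 :=
    SWalk.sign_eq_one_of_even_closed hσ (hsame i i) hℓ hc (by omega) h_even
      (hw.append (hr.append (hw'.append hr)))
  rcases hr.sign_eq_one_or_neg_one hσ with rfl | rfl <;>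
    rcases hw'.sign_eq_one_or_neg_one hσ with rfl | rfl <;>
    linarith
end

section
/- Let G be an ergodic balanced signed digraph with partition S, S̄. Then the voter model steady state is x = 1̂_S π̂_S^T (x_0 - (1/2)1) + (1/2)1, where π is the stationary distribution of the unsigned chain. -/
open Matrix Filter Topology Finset

/-- Weighted out-degree `d_i = Σ_j |A_{ij}|` of a signed weighted digraph. -/
noncomputable def sdeg {V : Type*} [Fintype V] (A : Matrix V V ℝ) (i : V) : ℝ :=
  ∑ j, |A i j|

/-- The signed transition matrix `P = D⁻¹A`. -/
noncomputable def signedP {V : Type*} [Fintype V] (A : Matrix V V ℝ) : Matrix V V ℝ :=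
  Matrix.of fun i j => A i j / sdeg A i

/-- The unsigned transition matrix `P̄ = D⁻¹|A|`. -/
noncomputable def unsignedP {V : Type*} [Fintype V] (A : Matrix V V ℝ) : Matrix V V ℝ :=
  Matrix.of fun i j => |A i j| / sdeg A i

/-- The vector `g⁻ = D⁻¹A⁻1` of weighted fractions of outgoing negative edges. -/
noncomputable def gneg {V : Type*} [Fintype V] (A : Matrix V V ℝ) (i : V) : ℝ :=
  (∑ j, max (-(A i j)) 0) / sdeg A i

/-- Ergodicity of the underlying (unsigned) digraph of a weighted signed digraph. -/
def SErgodic {V : Type*} (A : Matrix V V ℝ) : Prop :=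
  DiStronglyConnected (fun i j => A i j ≠ 0) ∧ DiAperiodic (fun i j => A i j ≠ 0)

/-- Balanced weighted signed digraph. -/
def SBalancedM {V : Type*} (A : Matrix V V ℝ) : Prop :=
  ∃ S : Set V, ∀ i j, A i j ≠ 0 → (0 < A i j ↔ (i ∈ S ↔ j ∈ S))

/-- Anti-balanced weighted signed digraph. -/
def SAntiBalancedM {V : Type*} (A : Matrix V V ℝ) : Prop :=
  ∃ S : Set V, ∀ i j, A i j ≠ 0 → (A i j < 0 ↔ (i ∈ S ↔ j ∈ S))

/-- `π` is a stationary distribution of the unsigned chain `P̄ = D⁻¹|A|`. -/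
def SStationary {V : Type*} [Fintype V] (A : Matrix V V ℝ) (π : V → ℝ) : Prop :=
  (∀ i, 0 ≤ π i) ∧ (∑ i, π i = 1) ∧ ∀ j, ∑ i, π i * unsignedP A i j = π j

/-!
Conjugating by the signature `s = ±1` of the bipartition, `y = s ⊙ (x - 1/2)` turns the signed
voter dynamics into the unsigned chain `y_{t+1} = P̄ y_t`: balance gives `P = diag s · P̄ · diag s`
and `g⁻ = (1 - P 1) / 2`. Ergodicity makes `P̄` primitive, so some power `P̄^N` has all entries
at least `δ > 0`, and such a stochastic matrix contracts the sup norm by `1 - δ` on vectors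
orthogonal to `π` (these take both signs). Since `π` is stationary, `y_t - (π ⬝ y_0) 1` stays
orthogonal to `π`, hence `y_t → (π ⬝ y_0) 1`; undoing the conjugation gives the limit of `x_t`.
-/

namespace DiWalk

variable {V : Type*} {E : V → V → Prop}

theorem append_s14 : ∀ {n m : ℕ} {i j k : V}, DiWalk E n i j → DiWalk E m j k →
    DiWalk E (n + m) i k
  | 0, _, _, _, _, rfl, h => by rwa [Nat.zero_add]
  | n + 1, m, _, _, _, ⟨l, hil, hl⟩, h => by
    rw [Nat.add_right_comm]
    exact ⟨l, hil, append_s14 hl h⟩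

theorem exists_adj_of_pos {n : ℕ} {i j : V} (h : DiWalk E n i j) (hn : 0 < n) : ∃ k, E i k := by
  obtain _ | n := n
  · exact absurd hn (lt_irrefl 0)
  · obtain ⟨k, hk, -⟩ := h
    exact ⟨k, hk⟩

end DiWalk

def closedWalkLengths {V : Type*} (E : V → V → Prop) (u : V) : AddSubmonoid ℕ where
  carrier := {n | DiWalk E n u u}
  zero_mem' := rfl
  add_mem' := DiWalk.append_s14

section Ergodic

variable {V : Type*} {E : V → V → Prop}

theorem DiAperiodic.exists_pos_diWalk_self (hap : DiAperiodic E) :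
    ∃ n, 0 < n ∧ ∃ i, DiWalk E n i i := by
  by_contra! h
  exact absurd (hap 2 fun n hn ⟨i, hi⟩ => absurd hi (h n hn i)) (by decide)

theorem DiStronglyConnected.setGcd_closedWalkLengths (hsc : DiStronglyConnected E)
    (hap : DiAperiodic E) (u : V) : Nat.setGcd (closedWalkLengths E u) = 1 := by
  refine hap _ fun n _ ⟨i, hi⟩ => ?_
  obtain ⟨a, hui⟩ := hsc u i
  obtain ⟨b, hiu⟩ := hsc i u
  have hab : Nat.setGcd (closedWalkLengths E u) ∣ a + b :=
    Nat.setGcd_dvd_of_mem (hui.append_s14 hiu)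
  have hanb : Nat.setGcd (closedWalkLengths E u) ∣ a + n + b :=
    Nat.setGcd_dvd_of_mem ((hui.append_s14 hi).append_s14 hiu)
  rw [Nat.add_right_comm] at hanb
  exact (Nat.dvd_add_right hab).mp hanb

theorem DiStronglyConnected.eventually_forall_diWalk [Finite V] (hsc : DiStronglyConnected E)
    (hap : DiAperiodic E) : ∀ᶠ n in atTop, ∀ i j, DiWalk E n i j := by
  obtain ⟨-, -, u, -⟩ := hap.exists_pos_diWalk_self
  obtain ⟨T, hT⟩ := Nat.exists_mem_closure_of_ge (closedWalkLengths E u : Set ℕ)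
  simp only [AddSubmonoid.closure_eq, hsc.setGcd_closedWalkLengths hap, isUnit_one.dvd,
    forall_const] at hT
  simp only [eventually_all]
  intro i j
  obtain ⟨a, hiu⟩ := hsc i u
  obtain ⟨b, huj⟩ := hsc u j
  filter_upwards [eventually_ge_atTop (a + T + b)] with n hn
  have hw := hiu.append_s14 ((hT (n - a - b) (by omega)).append_s14 huj)
  rwa [show a + (n - a - b + b) = n by omega] at hw

theorem DiStronglyConnected.exists_pos_forall_diWalk [Finite V] (hsc : DiStronglyConnected E)
    (hap : DiAperiodic E) : ∃ n, 0 < n ∧ ∀ i j, DiWalk E n i j :=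
  ((eventually_gt_atTop 0).and (hsc.eventually_forall_diWalk hap)).exists

end Ergodic

theorem tendsto_zero_of_antitone_of_le_mul {f : ℕ → ℝ} (hf0 : ∀ t, 0 ≤ f t) (hf : Antitone f)
    {N : ℕ} (hN : 0 < N) {κ : ℝ} (hκ0 : 0 ≤ κ) (hκ1 : κ < 1)
    (hcontr : ∀ t, f (t + N) ≤ κ * f t) : Tendsto f atTop (𝓝 0) := by
  have hgeom : ∀ k, f (k * N) ≤ κ ^ k * f 0 := by
    intro k
    induction k with
    | zero => simp
    | succ k ih =>
      calc f ((k + 1) * N) = f (k * N + N) := by rw [Nat.succ_mul]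
        _ ≤ κ * f (k * N) := hcontr _
        _ ≤ κ * (κ ^ k * f 0) := mul_le_mul_of_nonneg_left ih hκ0
        _ = κ ^ (k + 1) * f 0 := by ring
  have hbound : ∀ t, f t ≤ κ ^ (t / N) * f 0 :=
    fun t => (hf (Nat.div_mul_le_self t N)).trans (hgeom _)
  have hlim : Tendsto (fun t => κ ^ (t / N) * f 0) atTop (𝓝 0) := by
    simpa using ((tendsto_pow_atTop_nhds_zero_of_lt_one hκ0 hκ1).comp
      (Nat.tendsto_div_const_atTop hN.ne')).mul_const (f 0)
  exact squeeze_zero hf0 hbound hlim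

section Stochastic

variable {V : Type*} [Fintype V]

theorem exists_nonpos_of_dotProduct_eq_zero {π e : V → ℝ} (hπ0 : ∀ i, 0 ≤ π i)
    (hπ1 : ∑ i, π i = 1) (he : π ⬝ᵥ e = 0) : ∃ j, e j ≤ 0 := by
  by_contra! hpos
  obtain ⟨j, -, hj⟩ := Finset.exists_ne_zero_of_sum_ne_zero (hπ1.trans_ne one_ne_zero)
  refine he.not_gt (Finset.sum_pos' (fun i _ => mul_nonneg (hπ0 i) (hpos i).le)
    ⟨j, mem_univ j, ?_⟩)
  exact mul_pos ((hπ0 j).lt_of_ne' hj) (hpos j)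

variable [DecidableEq V]

theorem mulVec_apply_le_of_nonpos {Q : Matrix V V ℝ} (hQ : Q ∈ rowStochastic ℝ V) {δ : ℝ}
    {e : V → ℝ} {i j : V} (hδ : δ ≤ Q i j) (hej : e j ≤ 0) : (Q *ᵥ e) i ≤ (1 - δ) * ‖e‖ := by
  have hterm : ∀ k, 0 ≤ Q i k * (‖e‖ - e k) := fun k =>
    mul_nonneg (nonneg_of_mem_rowStochastic hQ)
      (sub_nonneg.2 ((le_abs_self _).trans (norm_le_pi_norm e k)))
  have hsum : ∑ k, Q i k * (‖e‖ - e k) = ‖e‖ - (Q *ᵥ e) i := by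
    simp only [mul_sub, Finset.sum_sub_distrib, ← Finset.sum_mul, sum_row_of_mem_rowStochastic hQ,
      one_mul, mulVec, dotProduct]
  calc (Q *ᵥ e) i = ‖e‖ - ∑ k, Q i k * (‖e‖ - e k) := by rw [hsum, sub_sub_cancel]
    _ ≤ ‖e‖ - Q i j * (‖e‖ - e j) :=
      sub_le_sub_left (Finset.single_le_sum (fun k _ => hterm k) (mem_univ j)) _
    _ ≤ ‖e‖ - δ * ‖e‖ := by
      gcongr
      · exact nonneg_of_mem_rowStochastic hQ
      · linarith
    _ = (1 - δ) * ‖e‖ := by ring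

theorem norm_mulVec_le_of_dotProduct_eq_zero {Q : Matrix V V ℝ} (hQ : Q ∈ rowStochastic ℝ V)
    {δ : ℝ} (hδ : ∀ i j, δ ≤ Q i j) {π e : V → ℝ} (hπ0 : ∀ i, 0 ≤ π i) (hπ1 : ∑ i, π i = 1)
    (he : π ⬝ᵥ e = 0) : ‖Q *ᵥ e‖ ≤ (1 - δ) * ‖e‖ := by
  obtain ⟨j, hj⟩ := exists_nonpos_of_dotProduct_eq_zero hπ0 hπ1 he
  obtain ⟨j', hj'⟩ := exists_nonpos_of_dotProduct_eq_zero hπ0 hπ1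
    (show π ⬝ᵥ -e = 0 by rw [dotProduct_neg, he, neg_zero])
  have hδ1 : δ ≤ 1 := (hδ j j).trans (le_one_of_mem_rowStochastic hQ)
  refine (pi_norm_le_iff_of_nonneg (mul_nonneg (sub_nonneg.2 hδ1) (norm_nonneg e))).2 fun i => ?_
  have hup := mulVec_apply_le_of_nonpos hQ (hδ i j) hj
  have hlow := mulVec_apply_le_of_nonpos hQ (hδ i j') hj'
  rw [mulVec_neg, norm_neg, Pi.neg_apply] at hlow
  rw [Real.norm_eq_abs, abs_le]
  constructor <;> linarith

theorem vecMul_pow_eq_self {R : Type*} [Semiring R] {M : Matrix V V R} {π : V → R}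
    (hπM : π ᵥ* M = π) (t : ℕ) : π ᵥ* (M ^ t) = π := by
  induction t with
  | zero => simp
  | succ t ih => rw [pow_succ, ← vecMul_vecMul, ih, hπM]

theorem tendsto_pow_mulVec_of_isPrimitive {M : Matrix V V ℝ} (hM : M ∈ rowStochastic ℝ V)
    (hprim : M.IsPrimitive) {π : V → ℝ} (hπ0 : ∀ i, 0 ≤ π i) (hπ1 : ∑ i, π i = 1)
    (hπM : π ᵥ* M = π) (w : V → ℝ) :
    Tendsto (fun t => (M ^ t) *ᵥ w) atTop (𝓝 fun _ => π ⬝ᵥ w) := by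
  obtain ⟨N, hN, hpos⟩ := hprim.exists_pos_pow
  obtain ⟨j, -⟩ := Finset.exists_ne_zero_of_sum_ne_zero (hπ1.trans_ne one_ne_zero)
  have : Nonempty V := ⟨j⟩
  obtain ⟨⟨i₀, j₀⟩, hmin⟩ := Finite.exists_min fun p : V × V => (M ^ N) p.1 p.2
  set δ := (M ^ N) i₀ j₀
  have hMN : M ^ N ∈ rowStochastic ℝ V := pow_mem hM N
  have hconst : ∀ t, (M ^ t) *ᵥ (fun _ => π ⬝ᵥ w) = fun _ => π ⬝ᵥ w := by
    intro t
    rw [show (fun _ : V => π ⬝ᵥ w) = (π ⬝ᵥ w) • (1 : V → ℝ) by ext; simp, mulVec_smul,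
      one_vecMul_of_mem_rowStochastic (pow_mem hM t)]
  set e := w - fun _ => π ⬝ᵥ w
  have he : ∀ t, π ⬝ᵥ ((M ^ t) *ᵥ e) = 0 := by
    intro t
    rw [dotProduct_mulVec, vecMul_pow_eq_self hπM, dotProduct_sub]
    simp only [dotProduct, ← Finset.sum_mul, hπ1, one_mul, sub_self]
  have hdiff : ∀ t, (M ^ t) *ᵥ w - (fun _ => π ⬝ᵥ w) = (M ^ t) *ᵥ e := fun t => by
    rw [mulVec_sub, hconst]
  rw [tendsto_iff_norm_sub_tendsto_zero]
  simp only [hdiff]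
  refine tendsto_zero_of_antitone_of_le_mul (fun t => norm_nonneg _)
    (antitone_nat_of_succ_le fun t => ?_) hN (sub_nonneg.2 (le_one_of_mem_rowStochastic hMN))
    (sub_lt_self 1 (hpos i₀ j₀)) fun t => ?_
  · have := norm_mulVec_le_of_dotProduct_eq_zero hM (fun i j => nonneg_of_mem_rowStochastic hM)
      hπ0 hπ1 (he t)
    rwa [sub_zero, one_mul, mulVec_mulVec, ← pow_succ'] at this
  · have := norm_mulVec_le_of_dotProduct_eq_zero hMN (fun i j => hmin (i, j)) hπ0 hπ1 (he t)
    rwa [mulVec_mulVec, ← pow_add, add_comm] at this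

end Stochastic

theorem Matrix.pow_apply_pos_of_diWalk {V R : Type*} [Fintype V] [DecidableEq V] [Semiring R]
    [PartialOrder R] [IsStrictOrderedRing R] {M : Matrix V V R} (hM : ∀ i j, 0 ≤ M i j)
    {E : V → V → Prop} (hE : ∀ i j, E i j → 0 < M i j) :
    ∀ {n : ℕ} {i j : V}, DiWalk E n i j → 0 < (M ^ n) i j
  | 0, _, _, rfl => by simp
  | n + 1, i, j, ⟨k, hik, hkj⟩ => by
    rw [pow_succ', mul_apply]
    exact Finset.sum_pos' (fun l _ => mul_nonneg (hM i l) (pow_apply_nonneg hM n l j))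
      ⟨k, mem_univ k, mul_pos (hE i k hik) (pow_apply_pos_of_diWalk hM hE hkj)⟩

/-- The vector `1̂_S` of the paper. -/
def partitionSign {V : Type*} [DecidableEq V] (S : Finset V) (i : V) : ℝ :=
  if i ∈ S then 1 else -1

theorem partitionSign_mul_self {V : Type*} [DecidableEq V] (S : Finset V) (i : V) :
    partitionSign S i * partitionSign S i = 1 := by
  unfold partitionSign
  split_ifs <;> norm_num

section SignedDigraph

variable {V : Type*} [Fintype V] {A : Matrix V V ℝ}

theorem SErgodic.sdeg_pos (herg : SErgodic A) (i : V) : 0 < sdeg A i := by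
  obtain ⟨n, hn, hwalk⟩ := herg.1.exists_pos_forall_diWalk herg.2
  obtain ⟨k, hk⟩ := (hwalk i i).exists_adj_of_pos hn
  exact Finset.sum_pos' (fun j _ => abs_nonneg _) ⟨k, mem_univ k, abs_pos.2 hk⟩

theorem gneg_apply {i : V} (hdeg : sdeg A i ≠ 0) :
    gneg A i = (1 - ∑ j, signedP A i j) / 2 := by
  have hneg : ∀ a : ℝ, max (-a) 0 = (|a| - a) / 2 := fun a => by
    rcases le_total a 0 with h | h
    · rw [abs_of_nonpos h, max_eq_left (by linarith)]; ring
    · rw [abs_of_nonneg h, max_eq_right (by linarith)]; ring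
  simp only [gneg, signedP, of_apply, hneg, ← Finset.sum_div, Finset.sum_sub_distrib]
  rw [← sdeg]
  field_simp

variable [DecidableEq V]

theorem unsignedP_mem_rowStochastic (hdeg : ∀ i, 0 < sdeg A i) :
    unsignedP A ∈ rowStochastic ℝ V := by
  refine mem_rowStochastic_iff_sum.2
    ⟨fun i j => div_nonneg (abs_nonneg _) (hdeg i).le, fun i => ?_⟩
  simp only [unsignedP, of_apply, ← Finset.sum_div]
  exact div_self (hdeg i).ne'

theorem SErgodic.isPrimitive_unsignedP (herg : SErgodic A) : (unsignedP A).IsPrimitive := by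
  have hM := unsignedP_mem_rowStochastic herg.sdeg_pos
  obtain ⟨N, hN, hwalk⟩ := herg.1.exists_pos_forall_diWalk herg.2
  refine ⟨fun i j => nonneg_of_mem_rowStochastic hM, N, hN, fun i j => ?_⟩
  exact pow_apply_pos_of_diWalk (fun i j => nonneg_of_mem_rowStochastic hM)
    (fun i j hij => div_pos (abs_pos.2 hij) (herg.sdeg_pos i)) (hwalk i j)

theorem signedP_apply_of_balanced {S : Finset V}
    (hbal : ∀ i j, A i j ≠ 0 → (0 < A i j ↔ (i ∈ S ↔ j ∈ S))) (i j : V) :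
    signedP A i j = partitionSign S i * partitionSign S j * unsignedP A i j := by
  simp only [signedP, unsignedP, of_apply, mul_div_assoc']
  congr 1
  rcases lt_trichotomy (A i j) 0 with hneg | hzero | hpos
  · have hsplit : ¬(i ∈ S ↔ j ∈ S) := fun h => hneg.not_gt ((hbal i j hneg.ne).2 h)
    rw [abs_of_neg hneg]
    unfold partitionSign
    split_ifs <;> simp_all
  · simp [hzero]
  · have hsame : i ∈ S ↔ j ∈ S := (hbal i j hpos.ne').1 hpos
    rw [abs_of_pos hpos]
    unfold partitionSign
    split_ifs <;> simp_all

noncomputable def voterGauge (S : Finset V) (x : V → ℝ) (i : V) : ℝ :=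
  partitionSign S i * (x i - 1 / 2)

theorem voterGauge_signedP_mulVec_add_gneg {S : Finset V}
    (hbal : ∀ i j, A i j ≠ 0 → (0 < A i j ↔ (i ∈ S ↔ j ∈ S))) (hdeg : ∀ i, sdeg A i ≠ 0)
    (x : V → ℝ) :
    voterGauge S (signedP A *ᵥ x + gneg A) = unsignedP A *ᵥ voterGauge S x := by
  funext i
  have hcentre :
      (signedP A *ᵥ x) i + gneg A i - 1 / 2 = ∑ j, signedP A i j * (x j - 1 / 2) := by
    simp only [gneg_apply (hdeg i), mulVec, dotProduct, mul_sub, Finset.sum_sub_distrib,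
      ← Finset.sum_mul]
    ring
  change partitionSign S i * ((signedP A *ᵥ x) i + gneg A i - 1 / 2) =
    ∑ j, unsignedP A i j * (partitionSign S j * (x j - 1 / 2))
  rw [hcentre, Finset.mul_sum]
  refine Finset.sum_congr rfl fun j _ => ?_
  rw [signedP_apply_of_balanced hbal]
  linear_combination (unsignedP A i j * partitionSign S j * (x j - 1 / 2)) *
    partitionSign_mul_self S i

end SignedDigraph

/-- For a balanced ergodic signed digraph with partition S, S̄, the voter model
steady state is `x = 1̂_S π̂_S^T (x_0 - (1/2)1) + (1/2)1`. -/
theorem balanced_ergodic_voter_steady_state {V : Type*} [Fintype V] [DecidableEq V]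
    (A : Matrix V V ℝ) (S : Finset V)
    (herg : SErgodic A)
    (hbal : ∀ i j, A i j ≠ 0 → (0 < A i j ↔ (i ∈ S ↔ j ∈ S)))
    (π : V → ℝ) (hπ : SStationary A π)
    (x : ℕ → V → ℝ)
    (hx : ∀ t, x (t + 1) = (signedP A).mulVec (x t) + gneg A) :
    Tendsto x atTop (nhds (fun i =>
      (if i ∈ S then (1 : ℝ) else -1) *
        (∑ j, (if j ∈ S then π j else -π j) * (x 0 j - 1 / 2)) + 1 / 2)) := by
  obtain ⟨hπ0, hπ1, hπstat⟩ := hπ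
  have hdeg : ∀ i, sdeg A i ≠ 0 := fun i => (herg.sdeg_pos i).ne'
  have hgauge : ∀ t, voterGauge S (x t) = (unsignedP A ^ t) *ᵥ voterGauge S (x 0) := by
    intro t
    induction t with
    | zero => simp
    | succ t ih =>
      rw [hx, voterGauge_signedP_mulVec_add_gneg hbal hdeg, ih, mulVec_mulVec, pow_succ']
  have hlim := tendsto_pow_mulVec_of_isPrimitive (unsignedP_mem_rowStochastic herg.sdeg_pos)
    herg.isPrimitive_unsignedP hπ0 hπ1 (funext hπstat) (voterGauge S (x 0))
  have hungauge : ∀ i, (fun t => x t i) =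
      fun t => partitionSign S i * ((unsignedP A ^ t) *ᵥ voterGauge S (x 0)) i + 1 / 2 :=
    fun i => funext fun t => by
      rw [← hgauge, voterGauge]
      linear_combination (1 / 2 - x t i) * partitionSign_mul_self S i
  rw [tendsto_pi_nhds] at hlim ⊢
  intro i
  rw [hungauge]
  convert ((hlim i).const_mul (partitionSign S i)).add_const (1 / 2) using 3
  congr 1
  refine Finset.sum_congr rfl fun j _ => ?_
  simp only [voterGauge, partitionSign]
  split_ifs <;> ring
end
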